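/- arXiv:2111.06613 — 3 statements merged into one kernel-verified Lean document; each statement's English description precedes it below -/
import Mathlib

section
/- Let X be a Hausdorff topological space and M an increasing multi-family on X. Then for every finite subset F of X, Inn(cl M)(F) ≤ cl(Inn M)(F), where Inn is the inner hull and cl the closure of a multi-family. -/
/-- A multi-family `M` on `X` is *increasing* if `S ⊆ S'` implies `M S ≤ M S'`. -/
def IsIncreasing {X : Type*} (M : Set X → ℕ∞) : Prop :=
  ∀ S S' : Set X, S ⊆ S' → M S ≤ M S'

/-- The *inner hull* of a multi-family `M` on `X`: the supremum of `M S₁ + … + M S_k`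
over all finite families of pairwise disjoint sets `S₁, …, S_k` with `S₁ ∪ … ∪ S_k = S`. -/
noncomputable def InnHull {X : Type*} (M : Set X → ℕ∞) (S : Set X) : ℕ∞ :=
  ⨆ (k : ℕ) (T : Fin k → Set X) (_ : (⋃ i, T i) = S)
    (_ : Pairwise (Function.onFun Disjoint T)), ∑ i, M (T i)

/-- The *closure* of a multi-family `M` on a topological space `X`: the infimum of
`M U` over all open `U ⊇ S`. -/
noncomputable def clM {X : Type*} [TopologicalSpace X] (M : Set X → ℕ∞) (S : Set X) : ℕ∞ :=
  ⨅ (U : Set X) (_ : IsOpen U) (_ : S ⊆ U), M U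

/-!
In a Hausdorff space the points of the finite set `F` have pairwise disjoint open
neighbourhoods, so a partition `T` of `F` thickens, inside any open `U ⊇ F`, to pairwise disjoint
open sets `W i ⊇ T i`. Then `clM M (T i) ≤ M (W i)`, and the `W i` together with `U \ ⋃ i, W i`
partition `U`, whence `∑ i, clM M (T i) ≤ InnHull M U`.
-/

open Set Function

theorem pairwise_disjoint_snoc {α : Type*} {k : ℕ} {W : Fin k → Set α} {s : Set α}
    (hW : Pairwise (Disjoint on W)) (hs : ∀ i, Disjoint (W i) s) :
    Pairwise (Disjoint on Fin.snoc W s) := by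
  simp only [Pairwise, onFun, Fin.forall_fin_succ', Fin.snoc_castSucc, Fin.snoc_last, ne_eq,
    Fin.castSucc_inj, Fin.castSucc_ne_last, (Fin.castSucc_ne_last _).symm, not_false_eq_true,
    forall_const, not_true_eq_false, IsEmpty.forall_iff, and_true]
  exact ⟨fun i => ⟨fun j hij => hW hij, hs i⟩, fun i => (hs i).symm⟩

theorem iUnion_snoc_sdiff_iUnion {α : Type*} {k : ℕ} {W : Fin k → Set α} {U : Set α}
    (hWU : ∀ i, W i ⊆ U) : ⋃ i, Fin.snoc (α := fun _ => Set α) W (U \ ⋃ j, W j) i = U := by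
  refine (iUnion_subset fun i => ?_).antisymm fun x hx => ?_
  · induction i using Fin.lastCases with
    | last => simpa only [Fin.snoc_last] using sdiff_subset
    | cast i => simpa only [Fin.snoc_castSucc] using hWU i
  · simp only [mem_iUnion, Fin.exists_fin_succ', Fin.snoc_castSucc, Fin.snoc_last, mem_sdiff]
    tauto

section MultiFamily

variable {X : Type*} {M : Set X → ℕ∞} {S : Set X} {a : ℕ∞}

theorem sum_le_innHull {k : ℕ} {T : Fin k → Set X} (hT : ⋃ i, T i = S)
    (hTd : Pairwise (Disjoint on T)) : ∑ i, M (T i) ≤ InnHull M S :=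
  le_iSup_of_le k <| le_iSup_of_le T <| le_iSup_of_le hT <| le_iSup_of_le hTd le_rfl

theorem innHull_le
    (h : ∀ (k : ℕ) (T : Fin k → Set X), ⋃ i, T i = S → Pairwise (Disjoint on T) →
      ∑ i, M (T i) ≤ a) :
    InnHull M S ≤ a :=
  iSup_le fun k => iSup_le fun T => iSup_le fun hT => iSup_le (h k T hT)

theorem sum_le_innHull_of_subset {k : ℕ} {W : Fin k → Set X} {U : Set X}
    (hWU : ∀ i, W i ⊆ U) (hWd : Pairwise (Disjoint on W)) : ∑ i, M (W i) ≤ InnHull M U :=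
  calc ∑ i, M (W i)
      ≤ ∑ i, M (Fin.snoc (α := fun _ => Set X) W (U \ ⋃ j, W j) i) := by
        simp only [Fin.sum_univ_castSucc, Fin.snoc_castSucc, le_self_add]
    _ ≤ InnHull M U :=
        sum_le_innHull (iUnion_snoc_sdiff_iUnion hWU) <| pairwise_disjoint_snoc hWd
          fun i => disjoint_sdiff_right.mono_left (subset_iUnion W i)

variable [TopologicalSpace X]

theorem clM_le {U : Set X} (hU : IsOpen U) (hSU : S ⊆ U) : clM M S ≤ M U :=
  iInf₂_le_of_le U hU <| iInf_le _ hSU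

theorem le_clM (h : ∀ U, IsOpen U → S ⊆ U → a ≤ M U) : a ≤ clM M S :=
  le_iInf₂ fun U hU => le_iInf (h U hU)

end MultiFamily

theorem Set.Finite.exists_isOpen_pairwise_disjoint_supsets {X ι : Type*} [TopologicalSpace X] [T2Space X]
    {F U : Set X} (hF : F.Finite) (hU : IsOpen U) (hFU : F ⊆ U) {T : ι → Set X}
    (hTF : ∀ i, T i ⊆ F) (hTd : Pairwise (Disjoint on T)) :
    ∃ W : ι → Set X, (∀ i, IsOpen (W i)) ∧ (∀ i, T i ⊆ W i) ∧ (∀ i, W i ⊆ U) ∧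
      Pairwise (Disjoint on W) := by
  obtain ⟨w, hw, hwd⟩ := hF.t2_separation
  refine ⟨fun i => ⋃ x ∈ T i, w x ∩ U, fun i => isOpen_biUnion fun x _ => (hw x).2.inter hU,
    fun i x hx => mem_biUnion hx ⟨(hw x).1, hFU (hTF i hx)⟩,
    fun i => iUnion₂_subset fun x _ => inter_subset_right, fun i j hij => ?_⟩
  simp only [onFun, disjoint_iUnion_left, disjoint_iUnion_right]
  intro y hy x hx
  exact (hwd (hTF i hx) (hTF j hy) ((hTd hij).ne_of_mem hx hy)).mono inter_subset_left
    inter_subset_left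

theorem innHull_cl_le_general {X : Type*} [TopologicalSpace X] [T2Space X] (M : Set X → ℕ∞)
    (F : Set X) (hF : F.Finite) :
    InnHull (clM M) F ≤ clM (InnHull M) F := by
  refine innHull_le fun k T hTF hTd => le_clM fun U hU hFU => ?_
  obtain ⟨W, hWo, hTW, hWU, hWd⟩ :=
    hF.exists_isOpen_pairwise_disjoint_supsets hU hFU (fun i => hTF ▸ subset_iUnion T i) hTd
  calc ∑ i, clM M (T i) ≤ ∑ i, M (W i) := Finset.sum_le_sum fun i _ => clM_le (hWo i) (hTW i)
    _ ≤ InnHull M U := sum_le_innHull_of_subset hWU hWd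

/-- In a Hausdorff space, on finite sets the inner hull of the closure is dominated by
the closure of the inner hull. -/
theorem innHull_cl_le {X : Type*} [TopologicalSpace X] [T2Space X] (M : Set X → ℕ∞)
    (hM : IsIncreasing M) (F : Set X) (hF : F.Finite) :
    InnHull (clM M) F ≤ clM (InnHull M) F :=
  innHull_cl_le_general M F hF
end

section
/- Let X and Y be Hausdorff topological spaces, f : X → Y a continuous map, and M an increasing multi-family on X which is inner. Then for every y ∈ Y, lim(f∗M)(y) ≥ multi-f(lim M)(y); that is, inf{ M(f⁻¹(V)) : V open in Y, y ∈ V } ≥ Σ_{x ∈ f⁻¹(y)} inf{ M(U) : U open in X, x ∈ U }, the sum taken in ℕ∞. -/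
/-- A multi-family `M` on `X` is *inner* if
`M (S₁ ∪ … ∪ S_k) ≥ M S₁ + … + M S_k` for every finite family of pairwise disjoint subsets. -/
def IsInner {X : Type*} (M : Set X → ℕ∞) : Prop :=
  ∀ (k : ℕ) (S : Fin k → Set X), Pairwise (Function.onFun Disjoint S) →
    ∑ i, M (S i) ≤ M (⋃ i, S i)

/-- The *limit multi-set* of a multi-family `M` on a topological space:
`limM M x = inf { M U : U open, x ∈ U }`. -/
noncomputable def limM {X : Type*} [TopologicalSpace X] (M : Set X → ℕ∞) (x : X) : ℕ∞ :=
  ⨅ (U : Set X) (_ : IsOpen U) (_ : x ∈ U), M U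

/-- Every `ℕ∞`-valued function has sum equal to the supremum of its finite partial sums. -/
lemma ENat.hasSum_eq_iSup {ι : Type*} (g : ι → ℕ∞) :
    HasSum g (⨆ s : Finset ι, ∑ i ∈ s, g i) :=
  tendsto_atTop_iSup fun _ _ h => Finset.sum_le_sum_of_subset h

lemma ENat.tsum_eq_iSup_sum {ι : Type*} (g : ι → ℕ∞) :
    ∑' i, g i = ⨆ s : Finset ι, ∑ i ∈ s, g i :=
  (ENat.hasSum_eq_iSup g).tsum_eq

/-- For continuous `f` between Hausdorff spaces and an inner increasing multi-family `M`,
the limit of the push dominates the multi-image of the limit: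
`inf { M (f⁻¹ V) : V open, y ∈ V } ≥ Σ_{x ∈ f⁻¹(y)} limM M x`. -/
theorem lim_push_ge_multiImage_lim {X Y : Type*} [TopologicalSpace X] [TopologicalSpace Y]
    [T2Space X] [T2Space Y] (f : X → Y) (hf : Continuous f) (M : Set X → ℕ∞)
    (hInc : IsIncreasing M) (hInn : IsInner M) (y : Y) :
    (⨅ (V : Set Y) (_ : IsOpen V) (_ : y ∈ V), M (f ⁻¹' V)) ≥
      ∑' x : (f ⁻¹' {y} : Set X), limM M x := by
  classical
  refine le_iInf fun V => le_iInf fun hV => le_iInf fun hyV => ?_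
  rw [ENat.tsum_eq_iSup_sum]
  refine iSup_le fun s => ?_
  -- pass to the image finset in `X`
  set t : Finset X := s.image Subtype.val with ht
  have hsum : ∑ x ∈ s, limM M (x : X) = ∑ x ∈ t, limM M x := by
    rw [ht, Finset.sum_image (fun a _ b _ h => Subtype.val_injective h)]
  have htmem : ∀ x ∈ t, f x = y := by
    intro x hx
    rw [ht, Finset.mem_image] at hx
    obtain ⟨a, _, rfl⟩ := hx
    exact a.2
  -- separate the points of `t` by disjoint open sets
  obtain ⟨U, hU, hdisj⟩ := (t.finite_toSet).t2_separation
  -- the disjoint open sets intersected with `f ⁻¹' V`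
  set W : X → Set X := fun x => U x ∩ f ⁻¹' V with hW
  have hWopen : ∀ x, IsOpen (W x) := fun x => (hU x).2.inter (hV.preimage hf)
  have hWmem : ∀ x ∈ t, x ∈ W x := fun x hx =>
    ⟨(hU x).1, by simp [Set.mem_preimage, htmem x hx, hyV]⟩
  have h1 : ∑ x ∈ t, limM M x ≤ ∑ x ∈ t, M (W x) := by
    refine Finset.sum_le_sum fun x hx => ?_
    exact iInf_le_of_le (W x) (iInf_le_of_le (hWopen x) (iInf_le _ (hWmem x hx)))
  -- index by `Fin t.card`
  set e : Fin t.card ≃ ↥t := t.equivFin.symm with he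
  set S : Fin t.card → Set X := fun i => W ((e i) : X) with hS
  have hSdisj : Pairwise (Function.onFun Disjoint S) := by
    intro i j hij
    have hne : ((e i) : X) ≠ ((e j) : X) := fun h =>
      hij (e.injective (Subtype.val_injective h))
    exact Disjoint.mono inf_le_left inf_le_left
      (hdisj (e i).2 (e j).2 hne)
  have h2 : ∑ x ∈ t, M (W x) = ∑ i, M (S i) := by
    rw [← Finset.sum_coe_sort t (fun x => M (W x)), ← Equiv.sum_comp e]
  have h3 : (⋃ i, S i) ⊆ f ⁻¹' V := Set.iUnion_subset fun i => Set.inter_subset_right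
  calc ∑ x ∈ s, limM M (x : X) = ∑ x ∈ t, limM M x := hsum
    _ ≤ ∑ x ∈ t, M (W x) := h1
    _ = ∑ i, M (S i) := h2
    _ ≤ M (⋃ i, S i) := hInn _ S hSdisj
    _ ≤ M (f ⁻¹' V) := hInc _ _ h3
end

section
/- Let coGap be the increasing multi-family on ℕ defined below. Then for every subset S of ℕ, the outer core satisfies Out(coGap)(S) = min(2, coGap(S)). -/
/-!
Splitting `S` into its even and its odd elements gives two pieces without consecutive elements,
each of `coGap` at most `1`; together with the one-piece cover this bounds the outer core by
`min 2 (coGap S)`. Conversely, let `S` be covered by finitely many pieces. If `S` is infinite, some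
piece is infinite. If `S` contains infinitely many pairs `n, n + 1`, pigeonholing on the pieces
containing `n` and `n + 1` gives either one piece containing infinitely many such pairs, or two
distinct infinite pieces; either way the pieces contribute at least `2`.
-/

/-- `coGap S` is the supremum of the `k : ℕ` such that `S` contains runs of `k`
consecutive integers arbitrarily far out. -/
noncomputable def coGap (S : Set ℕ) : ℕ∞ :=
  ⨆ (k : ℕ) (_ : ∀ N : ℕ, ∃ n ≥ N, ∀ i < k, n + i ∈ S), (k : ℕ∞)

/-- The *outer core* of a multi-family `M` on `X`: the infimum of `M S₁ + … + M S_k`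
over all finite families `S₁, …, S_k` with `S₁ ∪ … ∪ S_k = S`. -/
noncomputable def OutCore {X : Type*} (M : Set X → ℕ∞) (S : Set X) : ℕ∞ :=
  ⨅ (k : ℕ) (T : Fin k → Set X) (_ : (⋃ i, T i) = S), ∑ i, M (T i)

open Filter

section OutCore

variable {X : Type*} {M : Set X → ℕ∞}

theorem outCore_le_sum {k : ℕ} (T : Fin k → Set X) : OutCore M (⋃ i, T i) ≤ ∑ i, M (T i) :=
  iInf₂_le_of_le k T <| iInf_le _ rfl

theorem outCore_le_self (S : Set X) : OutCore M S ≤ M S := by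
  simpa [Set.iUnion_const] using outCore_le_sum (M := M) fun _ : Fin 1 => S

theorem outCore_le_add (A B : Set X) : OutCore M (A ∪ B) ≤ M A + M B := by
  convert outCore_le_sum (M := M) ![A, B] using 2
  · ext; simp [Fin.exists_fin_two]
  · simp [Fin.sum_univ_two]

theorem le_outCore_iff {S : Set X} {m : ℕ∞} :
    m ≤ OutCore M S ↔ ∀ k (T : Fin k → Set X), (⋃ i, T i) = S → m ≤ ∑ i, M (T i) := by
  simp only [OutCore, le_iInf_iff]

end OutCore

section coGap

variable {S : Set ℕ}

theorem natCast_le_coGap_iff {k : ℕ} :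
    (k : ℕ∞) ≤ coGap S ↔ ∃ᶠ n in atTop, ∀ i < k, n + i ∈ S := by
  simp only [frequently_atTop]
  refine ⟨fun h => ?_, fun h => le_iSup₂_of_le k h le_rfl⟩
  cases k with
  | zero => exact fun N => ⟨N, le_rfl, by simp⟩
  | succ k =>
    have hk : (k : ℕ∞) < coGap S := lt_of_lt_of_le (mod_cast k.lt_succ_self) h
    obtain ⟨j, hj⟩ := lt_iSup_iff.mp hk
    obtain ⟨hrun, hkj⟩ := lt_iSup_iff.mp hj
    have hlen : k + 1 ≤ j := by exact_mod_cast Order.add_one_le_of_lt hkj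
    exact fun N => (hrun N).imp fun n ⟨hn, hi⟩ => ⟨hn, fun i hik => hi i (by omega)⟩

theorem one_le_coGap_iff : 1 ≤ coGap S ↔ ∃ᶠ n in atTop, n ∈ S := by
  simpa using natCast_le_coGap_iff (S := S) (k := 1)

theorem two_le_coGap_iff : 2 ≤ coGap S ↔ ∃ᶠ n in atTop, n ∈ S ∧ n + 1 ∈ S := by
  refine natCast_le_coGap_iff.trans (frequently_congr (.of_forall fun n => ?_))
  simp [Nat.le_one_iff_eq_zero_or_eq_one, or_imp, forall_and]

theorem coGap_le_one (hS : ∀ n ∈ S, n + 1 ∉ S) : coGap S ≤ 1 := by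
  refine Order.le_of_lt_add_one (lt_of_not_ge fun h => ?_)
  rw [one_add_one_eq_two, two_le_coGap_iff] at h
  obtain ⟨n, hn, hn1⟩ := h.exists
  exact hS n hn hn1

theorem outCore_coGap_le_two (S : Set ℕ) : OutCore coGap S ≤ 2 := by
  have hsplit (P : ℕ → Prop) (hP : ∀ n, P n → ¬P (n + 1)) : coGap {n ∈ S | P n} ≤ 1 :=
    coGap_le_one fun n hn hn1 => hP n hn.2 hn1.2
  calc OutCore coGap S = OutCore coGap ({n ∈ S | Even n} ∪ {n ∈ S | Odd n}) := by
        congr; ext n; simp [← and_or_left, Nat.even_or_odd]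
    _ ≤ 1 + 1 := (outCore_le_add _ _).trans <| add_le_add
        (hsplit _ fun n => by simp [Nat.even_add_one]) (hsplit _ fun n => by simp [Nat.odd_add_one])
    _ = 2 := one_add_one_eq_two

end coGap

section Cover

variable {ι : Type*} [Fintype ι] {S : Set ℕ} {T : ι → Set ℕ}

theorem coGap_le_sum_coGap (i : ι) : coGap (T i) ≤ ∑ j, coGap (T j) :=
  Finset.single_le_sum (f := fun j => coGap (T j)) (fun _ _ => zero_le) (Finset.mem_univ i)

theorem one_le_sum_coGap (hT : S ⊆ ⋃ i, T i) (hS : 1 ≤ coGap S) : 1 ≤ ∑ i, coGap (T i) := by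
  rw [one_le_coGap_iff] at hS
  obtain ⟨i, hi⟩ := frequently_exists.mp (hS.mono fun n hn => Set.mem_iUnion.mp (hT hn))
  exact (one_le_coGap_iff.mpr hi).trans (coGap_le_sum_coGap i)

theorem two_le_sum_coGap (hT : S ⊆ ⋃ i, T i) (hS : 2 ≤ coGap S) : 2 ≤ ∑ i, coGap (T i) := by
  rw [two_le_coGap_iff] at hS
  have hpairs : ∃ᶠ n in atTop, ∃ i j, n ∈ T i ∧ n + 1 ∈ T j := hS.mono fun n ⟨h0, h1⟩ =>
    let ⟨i, hi⟩ := Set.mem_iUnion.mp (hT h0)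
    let ⟨j, hj⟩ := Set.mem_iUnion.mp (hT h1)
    ⟨i, j, hi, hj⟩
  simp only [frequently_exists] at hpairs
  obtain ⟨i, j, hij⟩ := hpairs
  rcases eq_or_ne i j with rfl | hne
  · exact (two_le_coGap_iff.mpr hij).trans (coGap_le_sum_coGap i)
  · have hi : 1 ≤ coGap (T i) := one_le_coGap_iff.mpr (hij.mono fun _ h => h.1)
    have hj : 1 ≤ coGap (T j) :=
      one_le_coGap_iff.mpr ((tendsto_add_atTop_nat 1).frequently (hij.mono fun _ h => h.2))
    calc (2 : ℕ∞) = 1 + 1 := one_add_one_eq_two.symm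
      _ ≤ coGap (T i) + coGap (T j) := add_le_add hi hj
      _ ≤ ∑ l, coGap (T l) :=
        Finset.add_le_sum (f := fun l => coGap (T l)) (fun _ _ => zero_le)
          (Finset.mem_univ i) (Finset.mem_univ j) hne

theorem min_two_coGap_le_sum_coGap (hT : S ⊆ ⋃ i, T i) :
    min 2 (coGap S) ≤ ∑ i, coGap (T i) := by
  by_cases h2 : 2 ≤ coGap S
  · exact (min_le_left _ _).trans (two_le_sum_coGap hT h2)
  refine (min_le_right _ _).trans ?_
  rcases eq_zero_or_pos (coGap S) with h0 | hpos
  · simp [h0]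
  · have hle : coGap S ≤ 1 := Order.le_of_lt_add_one (by rwa [one_add_one_eq_two, ← not_le])
    exact hle.trans (one_le_sum_coGap hT (Order.one_le_iff_pos.mpr hpos))

end Cover

/-- The outer core of `coGap` is `min 2 (coGap S)`. -/
theorem outCore_coGap (S : Set ℕ) : OutCore coGap S = min 2 (coGap S) :=
  le_antisymm (le_min (outCore_coGap_le_two S) (outCore_le_self S)) <|
    le_outCore_iff.mpr fun _ _ hT => min_two_coGap_le_sum_coGap hT.ge
end
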